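/- Let d be a positive even integer and let G' be obtained from a simple graph G by replacing each edge {u,v} by a path on d new internal vertices (i.e., subdividing the edge d times). Then G has a vertex cover of size at most k if and only if G' has a vertex cover of size at most k + (d/2)·|E(G)|. -/

import Mathlib

variable {V : Type} [Fintype V] [LinearOrder V]

/-- Vertex type of the graph obtained from `G` by subdividing each edge `d` times:
original vertices plus, for each edge, `d` internal path vertices. -/
abbrev SubVert (G : SimpleGraph V) (d : ℕ) : Type := V ⊕ (↥G.edgeSet × Fin d)

/-- Underlying relation of the subdivision: the smaller endpoint of an edge `e` is
joined to internal vertex `(e, 0)`, the larger endpoint to `(e, d-1)`, and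
consecutive internal vertices of the same edge are joined. -/
def subdivideRel (G : SimpleGraph V) (d : ℕ) : SubVert G d → SubVert G d → Prop
  | Sum.inl u, Sum.inr ⟨e, i⟩ =>
      ((i : ℕ) = 0 ∧ u ∈ (e : Sym2 V) ∧ ∀ w ∈ (e : Sym2 V), u ≤ w) ∨
      ((i : ℕ) = d - 1 ∧ u ∈ (e : Sym2 V) ∧ ∀ w ∈ (e : Sym2 V), w ≤ u)
  | Sum.inr ⟨e, i⟩, Sum.inr ⟨f, j⟩ => e = f ∧ (j : ℕ) = (i : ℕ) + 1
  | _, _ => False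

/-- The graph obtained from `G` by subdividing every edge `d` times, i.e. replacing
each edge by a path with `d` internal vertices. -/
def subdivide (G : SimpleGraph V) (d : ℕ) : SimpleGraph (SubVert G d) :=
  SimpleGraph.fromRel (subdivideRel G d)

/-- `S` is a vertex cover of `G`: every edge has an endpoint in `S`. -/
def SimpleGraph.IsVertexCover' {α : Type*} (G : SimpleGraph α) (S : Set α) : Prop :=
  ∀ u v : α, G.Adj u v → u ∈ S ∨ v ∈ S

section AuxLemmas

variable {α : Type} [LinearOrder α]

lemma sym2_inf_mem (e : Sym2 α) : e.inf ∈ e := by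
  induction e using Sym2.ind with
  | _ x y =>
    rcases le_total x y with h | h
    · simp [inf_eq_left.mpr h]
    · simp [inf_eq_right.mpr h]

lemma sym2_sup_mem (e : Sym2 α) : e.sup ∈ e := by
  induction e using Sym2.ind with
  | _ x y =>
    rcases le_total x y with h | h
    · simp [sup_eq_right.mpr h]
    · simp [sup_eq_left.mpr h]

lemma sym2_inf_le {e : Sym2 α} {w : α} (h : w ∈ e) : e.inf ≤ w := by
  induction e using Sym2.ind with
  | _ x y =>
    rcases Sym2.mem_iff.1 h with rfl | rfl
    · simp
    · simp

lemma sym2_le_sup {e : Sym2 α} {w : α} (h : w ∈ e) : w ≤ e.sup := by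
  induction e using Sym2.ind with
  | _ x y =>
    rcases Sym2.mem_iff.1 h with rfl | rfl
    · simp
    · simp

lemma sym2_mk_inf_sup (e : Sym2 α) : s(e.inf, e.sup) = e := by
  induction e using Sym2.ind with
  | _ x y =>
    rcases le_total x y with h | h
    · rw [Sym2.inf_mk, Sym2.sup_mk, inf_eq_left.mpr h, sup_eq_right.mpr h]
    · rw [Sym2.inf_mk, Sym2.sup_mk, inf_eq_right.mpr h, sup_eq_left.mpr h, Sym2.eq_swap]

lemma card_filter_parity (d r : ℕ) (hde : Even d) :
    ((Finset.univ : Finset (Fin d)).filter (fun i => i.val % 2 = r)).card ≤ d / 2 := by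
  classical
  have h2 : d % 2 = 0 := Nat.even_iff.mp hde
  rcases Nat.eq_zero_or_pos d with rfl | hd
  · simp
  have hlt : ∀ i : Fin d, i.val / 2 < d / 2 := fun i => by have := i.2; omega
  have := Finset.card_le_card_of_injOn
      (s := (Finset.univ : Finset (Fin d)).filter (fun i => i.val % 2 = r))
      (t := (Finset.univ : Finset (Fin (d / 2))))
      (fun i : Fin d => (⟨i.val / 2, hlt i⟩ : Fin (d / 2)))
      (fun a _ => Finset.mem_univ _) ?_
  · simpa using this
  · intro a ha b hb hab
    simp only [Finset.coe_filter, Set.mem_setOf_eq] at ha hb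
    have : a.val / 2 = b.val / 2 := congrArg Fin.val hab
    exact Fin.ext (by omega)

end AuxLemmas

section Main

variable (G : SimpleGraph V) [DecidableRel G.Adj]

omit [Fintype V] [DecidableRel G.Adj] in
lemma edge_adj (e : ↥G.edgeSet) : G.Adj (e : Sym2 V).inf (e : Sym2 V).sup := by
  have h := e.2
  rw [← sym2_mk_inf_sup (e : Sym2 V)] at h
  exact (SimpleGraph.mem_edgeSet G).mp h

lemma subVert_inr_mem_aux {d : ℕ} (S : Finset V) (hS : G.IsVertexCover' (S : Set V))
    (hd : 0 < d) (hde : Even d) :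
    ∀ a b : SubVert G d, (subdivide G d).Adj a b →
      a ∈ ((S.image Sum.inl ∪ (Finset.univ : Finset ↥G.edgeSet).biUnion
        (fun e => (Finset.univ.filter
            (fun i : Fin d => i.val % 2 = if (e : Sym2 V).inf ∈ S then 1 else 0)).image
          (fun i => (Sum.inr (e, i) : SubVert G d)))) : Finset (SubVert G d)) ∨
      b ∈ (S.image Sum.inl ∪ (Finset.univ : Finset ↥G.edgeSet).biUnion
        (fun e => (Finset.univ.filter
            (fun i : Fin d => i.val % 2 = if (e : Sym2 V).inf ∈ S then 1 else 0)).image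
          (fun i => (Sum.inr (e, i) : SubVert G d)))) := by
  classical
  set S' : Finset (SubVert G d) := S.image Sum.inl ∪ (Finset.univ : Finset ↥G.edgeSet).biUnion
        (fun e => (Finset.univ.filter
            (fun i : Fin d => i.val % 2 = if (e : Sym2 V).inf ∈ S then 1 else 0)).image
          (fun i => (Sum.inr (e, i) : SubVert G d))) with hS'def
  have hmemInl : ∀ u : V, u ∈ S → (Sum.inl u : SubVert G d) ∈ S' := fun u hu =>
    Finset.mem_union_left _ (Finset.mem_image.mpr ⟨u, hu, rfl⟩)
  have hmemInr : ∀ (e : ↥G.edgeSet) (i : Fin d),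
      (i.val % 2 = if (e : Sym2 V).inf ∈ S then 1 else 0) →
      (Sum.inr (e, i) : SubVert G d) ∈ S' := by
    intro e i hi
    refine Finset.mem_union_right _ (Finset.mem_biUnion.mpr ⟨e, Finset.mem_univ _, ?_⟩)
    exact Finset.mem_image.mpr ⟨i, Finset.mem_filter.mpr ⟨Finset.mem_univ _, hi⟩, rfl⟩
  have key : ∀ (u : V) (e : ↥G.edgeSet) (i : Fin d),
      subdivideRel G d (Sum.inl u) (Sum.inr (e, i)) →
      (Sum.inl u : SubVert G d) ∈ S' ∨ (Sum.inr (e, i) : SubVert G d) ∈ S' := by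
    intro u e i hrel
    rcases hrel with ⟨hi0, hmem, hmin⟩ | ⟨hid, hmem, hmax⟩
    · -- u is the min endpoint, i = 0
      by_cases hinf : (e : Sym2 V).inf ∈ S
      · left
        have hu : u = (e : Sym2 V).inf := le_antisymm (hmin _ (sym2_inf_mem _)) (sym2_inf_le hmem)
        exact hmemInl u (hu ▸ hinf)
      · right
        exact hmemInr e i (by rw [if_neg hinf]; omega)
    · -- u is the max endpoint, i = d - 1
      have hu : u = (e : Sym2 V).sup := le_antisymm (sym2_le_sup hmem) (hmax _ (sym2_sup_mem _))
      by_cases hinf : (e : Sym2 V).inf ∈ S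
      · right
        refine hmemInr e i ?_
        rw [if_pos hinf]
        have h2 : d % 2 = 0 := Nat.even_iff.mp hde
        omega
      · left
        have hcov := hS _ _ (edge_adj G e)
        rcases hcov with h | h
        · exact absurd h hinf
        · exact hmemInl u (hu ▸ h)
  intro a b hadj
  rw [subdivide, SimpleGraph.fromRel_adj] at hadj
  obtain ⟨hne, hrel⟩ := hadj
  rcases a with u | ⟨e, i⟩ <;> rcases b with v | ⟨f, j⟩
  · simp only [subdivideRel] at hrel
    rcases hrel with h | h <;> exact h.elim
  · rcases hrel with h | h
    · exact key u f j h
    · simp only [subdivideRel] at h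
  · rcases hrel with h | h
    · simp only [subdivideRel] at h
    · exact (key v e i h).symm
  · have h2 : d % 2 = 0 := Nat.even_iff.mp hde
    have hrlt : ∀ e : ↥G.edgeSet, (if (e : Sym2 V).inf ∈ S then 1 else 0) < 2 := by
      intro e; split <;> omega
    rcases hrel with ⟨rfl, hji⟩ | ⟨rfl, hij⟩
    · have hor : i.val % 2 = (if (e : Sym2 V).inf ∈ S then 1 else 0) ∨
          j.val % 2 = (if (e : Sym2 V).inf ∈ S then 1 else 0) := by
        have := hrlt e; omega
      rcases hor with h | h
      · exact Or.inl (hmemInr e i h)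
      · exact Or.inr (hmemInr e j h)
    · have hor : i.val % 2 = (if (f : Sym2 V).inf ∈ S then 1 else 0) ∨
          j.val % 2 = (if (f : Sym2 V).inf ∈ S then 1 else 0) := by
        have := hrlt f; omega
      rcases hor with h | h
      · exact Or.inl (hmemInr f i h)
      · exact Or.inr (hmemInr f j h)
end Main

/-- `G` has a vertex cover of size at most `k` iff the graph obtained by subdividing each
edge `d` times (`d` positive and even) has one of size at most `k + (d/2)·|E(G)|`. -/
theorem vertexCover_subdivide_iff (G : SimpleGraph V) [DecidableRel G.Adj]
    (d k : ℕ) (hd : 0 < d) (hde : Even d) :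
    (∃ S : Finset V, G.IsVertexCover' ↑S ∧ S.card ≤ k) ↔
      (∃ S : Finset (SubVert G d), (subdivide G d).IsVertexCover' ↑S ∧
        S.card ≤ k + (d / 2) * G.edgeFinset.card) := by
  classical
  have h2 : d % 2 = 0 := Nat.even_iff.mp hde
  have hEcard : (Finset.univ : Finset ↥G.edgeSet).card = G.edgeFinset.card := by
    rw [Finset.card_univ, SimpleGraph.edgeFinset, Set.toFinset_card]
  constructor
  · -- Forward direction
    rintro ⟨S, hS, hScard⟩
    set S' : Finset (SubVert G d) := S.image Sum.inl ∪ (Finset.univ : Finset ↥G.edgeSet).biUnion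
        (fun e => (Finset.univ.filter
            (fun i : Fin d => i.val % 2 = if (e : Sym2 V).inf ∈ S then 1 else 0)).image
          (fun i => (Sum.inr (e, i) : SubVert G d))) with hS'def
    refine ⟨S', ?_, ?_⟩
    · intro a b hadj
      simp only [Finset.mem_coe]
      rw [hS'def]
      exact subVert_inr_mem_aux G S hS hd hde a b hadj
    · have hB : ((Finset.univ : Finset ↥G.edgeSet).biUnion
          (fun e => (Finset.univ.filter
              (fun i : Fin d => i.val % 2 = if (e : Sym2 V).inf ∈ S then 1 else 0)).image
            (fun i => (Sum.inr (e, i) : SubVert G d)))).card ≤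
          G.edgeFinset.card * (d / 2) := by
        calc _ ≤ ∑ e : ↥G.edgeSet, ((Finset.univ.filter
              (fun i : Fin d => i.val % 2 = if (e : Sym2 V).inf ∈ S then 1 else 0)).image
            (fun i => (Sum.inr (e, i) : SubVert G d))).card := Finset.card_biUnion_le
          _ ≤ ∑ _e : ↥G.edgeSet, d / 2 := by
              refine Finset.sum_le_sum fun e _ => ?_
              exact le_trans (Finset.card_image_le) (card_filter_parity d _ hde)
          _ = G.edgeFinset.card * (d / 2) := by
              rw [Finset.sum_const, smul_eq_mul, hEcard]
      calc S'.card ≤ (S.image Sum.inl).card + _ := Finset.card_union_le _ _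
        _ ≤ S.card + G.edgeFinset.card * (d / 2) :=
            Nat.add_le_add Finset.card_image_le hB
        _ ≤ k + d / 2 * G.edgeFinset.card := by
            rw [Nat.mul_comm]; exact Nat.add_le_add_right hScard _
  · -- Backward direction
    rintro ⟨S', hS', hS'card⟩
    -- classify subdivision vertices by their edge
    set fOpt : SubVert G d → Option ↥G.edgeSet :=
      (fun x => match x with
        | Sum.inl _ => none
        | Sum.inr p => some p.1) with hfOpt
    have hfiber : S'.card = ∑ o : Option ↥G.edgeSet,
        (S'.filter (fun x => fOpt x = o)).card :=
      Finset.card_eq_sum_card_fiberwise (fun x _ => Finset.mem_univ _)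
    set TV : Finset V := Finset.univ.filter (fun v => (Sum.inl v : SubVert G d) ∈ S') with hTV
    set bad : ↥G.edgeSet → Prop :=
      (fun e => (Sum.inl (e : Sym2 V).inf : SubVert G d) ∉ S' ∧
        (Sum.inl (e : Sym2 V).sup : SubVert G d) ∉ S') with hbad
    set Bad : Finset ↥G.edgeSet := Finset.univ.filter bad with hBad
    -- adjacency facts in the subdivision
    have hadjmid : ∀ (e : ↥G.edgeSet) (i j : Fin d), (j : ℕ) = (i : ℕ) + 1 →
        (subdivide G d).Adj (Sum.inr (e, i)) (Sum.inr (e, j)) := by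
      intro e i j hij
      rw [subdivide, SimpleGraph.fromRel_adj]
      constructor
      · simp only [ne_eq, Sum.inr.injEq, Prod.mk.injEq, not_and]
        intro _ hijeq
        rw [hijeq] at hij
        omega
      · exact Or.inl ⟨rfl, hij⟩
    have hadj0 : ∀ e : ↥G.edgeSet,
        (subdivide G d).Adj (Sum.inl (e : Sym2 V).inf) (Sum.inr (e, (⟨0, hd⟩ : Fin d))) := by
      intro e
      rw [subdivide, SimpleGraph.fromRel_adj]
      exact ⟨by simp, Or.inl (Or.inl ⟨rfl, sym2_inf_mem _, fun w hw => sym2_inf_le hw⟩)⟩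
    have hadjd : ∀ e : ↥G.edgeSet,
        (subdivide G d).Adj (Sum.inl (e : Sym2 V).sup)
          (Sum.inr (e, (⟨d - 1, by omega⟩ : Fin d))) := by
      intro e
      rw [subdivide, SimpleGraph.fromRel_adj]
      exact ⟨by simp, Or.inl (Or.inr ⟨rfl, sym2_sup_mem _, fun w hw => sym2_le_sup hw⟩)⟩
    -- lower bound on number of internal vertices of each edge in the cover
    have hkey : ∀ e : ↥G.edgeSet, d / 2 + (if bad e then 1 else 0) ≤
        (S'.filter (fun x => fOpt x = some e)).card := by
      intro e
      by_cases hb : bad e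
      · rw [if_pos hb]
        have hsel : ∀ j : Fin (d / 2 + 1), ∃ i : Fin d,
            2 * j.val - 1 ≤ i.val ∧ i.val ≤ 2 * j.val ∧ (Sum.inr (e, i) : SubVert G d) ∈ S' := by
          intro j
          have hj := j.2
          by_cases hj0 : j.val = 0
          · refine ⟨⟨0, hd⟩, show 2 * j.val - 1 ≤ 0 by omega, show 0 ≤ 2 * j.val by omega, ?_⟩
            rcases hS' _ _ (hadj0 e) with h | h
            · exact absurd h hb.1
            · exact h
          · by_cases hjtop : j.val = d / 2
            · refine ⟨⟨d - 1, by omega⟩, ?_, ?_, ?_⟩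
              · show 2 * j.val - 1 ≤ d - 1
                omega
              · show d - 1 ≤ 2 * j.val
                omega
              rcases hS' _ _ (hadjd e) with h | h
              · exact absurd h hb.2
              · exact h
            · have h1j : 1 ≤ j.val ∧ j.val < d / 2 := by omega
              have hlt1 : 2 * j.val - 1 < d := by omega
              have hlt2 : 2 * j.val < d := by omega
              have hadj := hadjmid e ⟨2 * j.val - 1, hlt1⟩ ⟨2 * j.val, hlt2⟩
                (show 2 * j.val = (2 * j.val - 1) + 1 by omega)
              rcases hS' _ _ hadj with h | h
              · exact ⟨⟨2 * j.val - 1, hlt1⟩, le_rfl, show 2 * j.val - 1 ≤ 2 * j.val by omega, h⟩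
              · exact ⟨⟨2 * j.val, hlt2⟩, show 2 * j.val - 1 ≤ 2 * j.val by omega, le_rfl, h⟩
        choose F hF1 hF2 hF3 using hsel
        have hinj := Finset.card_le_card_of_injOn
            (s := (Finset.univ : Finset (Fin (d / 2 + 1))))
            (t := S'.filter (fun x => fOpt x = some e))
            (fun j => (Sum.inr (e, F j) : SubVert G d))
            (fun j _ => Finset.mem_filter.mpr ⟨hF3 j, rfl⟩) ?_
        · simpa using hinj
        · intro a _ b _ hab
          simp only [Sum.inr.injEq, Prod.mk.injEq, true_and] at hab
          have hv : (F a).val = (F b).val := congrArg Fin.val hab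
          have ha1 := hF1 a; have ha2 := hF2 a
          have hb1 := hF1 b; have hb2 := hF2 b
          exact Fin.ext (by omega)
      · rw [if_neg hb, add_zero]
        rcases Nat.eq_zero_or_pos (d / 2) with hz | hpos
        · omega
        have hsel : ∀ j : Fin (d / 2), ∃ i : Fin d,
            2 * j.val ≤ i.val ∧ i.val ≤ 2 * j.val + 1 ∧ (Sum.inr (e, i) : SubVert G d) ∈ S' := by
          intro j
          have hj := j.2
          have hlt1 : 2 * j.val < d := by omega
          have hlt2 : 2 * j.val + 1 < d := by omega
          have hadj := hadjmid e ⟨2 * j.val, hlt1⟩ ⟨2 * j.val + 1, hlt2⟩ rfl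
          rcases hS' _ _ hadj with h | h
          · exact ⟨⟨2 * j.val, hlt1⟩, le_rfl, show 2 * j.val ≤ 2 * j.val + 1 by omega, h⟩
          · exact ⟨⟨2 * j.val + 1, hlt2⟩, show 2 * j.val ≤ 2 * j.val + 1 by omega, le_rfl, h⟩
        choose F hF1 hF2 hF3 using hsel
        have hinj := Finset.card_le_card_of_injOn
            (s := (Finset.univ : Finset (Fin (d / 2))))
            (t := S'.filter (fun x => fOpt x = some e))
            (fun j => (Sum.inr (e, F j) : SubVert G d))
            (fun j _ => Finset.mem_filter.mpr ⟨hF3 j, rfl⟩) ?_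
        · simpa using hinj
        · intro a _ b _ hab
          simp only [Sum.inr.injEq, Prod.mk.injEq, true_and] at hab
          have hv : (F a).val = (F b).val := congrArg Fin.val hab
          have ha1 := hF1 a; have ha2 := hF2 a
          have hb1 := hF1 b; have hb2 := hF2 b
          exact Fin.ext (by omega)
    -- the original-vertex part of the cover
    have hTVle : TV.card ≤ (S'.filter (fun x => fOpt x = none)).card := by
      refine Finset.card_le_card_of_injOn (fun v => (Sum.inl v : SubVert G d)) ?_ ?_
      · intro v hv
        rw [hTV] at hv
        exact Finset.mem_filter.mpr ⟨(Finset.mem_filter.mp hv).2, rfl⟩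
      · intro a _ b _ hab
        exact Sum.inl.injEq _ _ ▸ hab
    -- total count
    have hsum : TV.card + (G.edgeFinset.card * (d / 2) + Bad.card) ≤ S'.card := by
      rw [hfiber, Fintype.sum_option]
      have hsum2 : G.edgeFinset.card * (d / 2) + Bad.card ≤
          ∑ e : ↥G.edgeSet, (S'.filter (fun x => fOpt x = some e)).card := by
        calc G.edgeFinset.card * (d / 2) + Bad.card
            = ∑ e : ↥G.edgeSet, (d / 2 + if bad e then 1 else 0) := by
              rw [Finset.sum_add_distrib, Finset.sum_const, smul_eq_mul, hEcard, hBad,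
                Finset.card_filter]
              congr 1
              refine Finset.sum_congr rfl fun x _ => ?_
              by_cases hx : bad x
              · rw [if_pos hx, if_pos hx]
              · rw [if_neg hx, if_neg hx]
          _ ≤ _ := Finset.sum_le_sum fun e _ => hkey e
      exact Nat.add_le_add hTVle hsum2
    -- construct the cover of G
    refine ⟨TV ∪ Bad.image (fun e : ↥G.edgeSet => (e : Sym2 V).inf), ?_, ?_⟩
    · intro u v huv
      set ehat : ↥G.edgeSet := ⟨s(u, v), (SimpleGraph.mem_edgeSet G).mpr huv⟩ with hehat
      by_cases hu : (Sum.inl u : SubVert G d) ∈ S'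
      · exact Or.inl (Finset.mem_coe.mpr (Finset.mem_union_left _
          (Finset.mem_filter.mpr ⟨Finset.mem_univ _, hu⟩)))
      · by_cases hv : (Sum.inl v : SubVert G d) ∈ S'
        · exact Or.inr (Finset.mem_coe.mpr (Finset.mem_union_left _
            (Finset.mem_filter.mpr ⟨Finset.mem_univ _, hv⟩)))
        · have hbadE : bad ehat := by
            constructor
            · rcases Sym2.mem_iff.mp (sym2_inf_mem ((ehat : Sym2 V))) with h | h
              · rw [h]; exact hu
              · rw [h]; exact hv
            · rcases Sym2.mem_iff.mp (sym2_sup_mem ((ehat : Sym2 V))) with h | h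
              · rw [h]; exact hu
              · rw [h]; exact hv
          have hmem : (ehat : Sym2 V).inf ∈ (Bad.image (fun e : ↥G.edgeSet => (e : Sym2 V).inf)) :=
            Finset.mem_image.mpr ⟨ehat, Finset.mem_filter.mpr ⟨Finset.mem_univ _, hbadE⟩, rfl⟩
          rcases Sym2.mem_iff.mp (sym2_inf_mem ((ehat : Sym2 V))) with h | h
          · exact Or.inl (Finset.mem_coe.mpr (Finset.mem_union_right _ (h ▸ hmem)))
          · exact Or.inr (Finset.mem_coe.mpr (Finset.mem_union_right _ (h ▸ hmem)))
    · have h1 : (TV ∪ Bad.image (fun e : ↥G.edgeSet => (e : Sym2 V).inf)).card ≤ TV.card + Bad.card :=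
        le_trans (Finset.card_union_le _ _) (Nat.add_le_add_left Finset.card_image_le _)
      have h3 : d / 2 * G.edgeFinset.card = G.edgeFinset.card * (d / 2) := Nat.mul_comm _ _
      omega
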